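/- Fix integers n > k > 1, an n-point dataset X ⊂ ℝ^{n−1}, and a partition C_1 ⊔ ⋯ ⊔ C_k = [n] such that every cluster satisfies |C_m| > 1 and the Dunn index satisfies DI(X; C_1,…,C_k) > 1. Then for every ε with 1 < ε ≤ DI(X; C_1,…,C_k), there exists an n-point dataset X_ε ⊂ ℝ^{n−1} with DI(X_ε; C_1,…,C_k) = ε, and yet for every perplexity ρ ∈ (1, n−1), TSNE_ρ(X) = TSNE_ρ(X_ε). -/

import Mathlib

/-!
Adding a constant `c ≥ 0` to every squared pairwise distance multiplies all Gaussian weights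
`exp (-‖x_i - x_l‖² / 2σ²)` around a point by the same factor and does not change which points
are nearest, so every conditional affinity, and with it every calibrated bandwidth, input
affinity, loss and set of stationary outputs, is unchanged. Such a shift is realised in
`ℝ^{n-1}` by appending to `x_i` the vertex `√(c/2) e_i` of a regular simplex in an orthogonal
space, since any `n` points have a congruent copy in `ℝ^{n-1}`. The shift turns the Dunn index
`a / b` into `√(a² + c) / √(b² + c)`, which decreases continuously from `a / b` towards `1` as
`c` grows, so a suitable `c` realises every value in `(1, DI]`.
-/

open scoped BigOperators RealInnerProductSpace
noncomputable section

namespace TSNEPaper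

variable {n k : ℕ} {E F : Type*}

/-- The set of nearest neighbors of point `i` (used for the `σ = 0` limit of the
conditional affinity). -/
def nearestSet [NormedAddCommGroup E] (X : Fin n → E) (i : Fin n) : Finset (Fin n) :=
  (Finset.univ.erase i).filter fun j => ∀ l ∈ Finset.univ.erase i, ‖X i - X j‖ ≤ ‖X i - X l‖

/-- Conditional t-SNE affinity `P_{j|i}(X; σ)`.  For `σ = 0` we take the limiting value
as `σ → 0⁺`, which puts equal mass on the nearest neighbors of `i`. -/
def condAffinity [NormedAddCommGroup E] (X : Fin n → E) (σ : ℝ) (i j : Fin n) : ℝ :=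
  if j = i then 0
  else if σ = 0 then (if j ∈ nearestSet X i then ((nearestSet X i).card : ℝ)⁻¹ else 0)
  else Real.exp (-‖X i - X j‖ ^ 2 / (2 * σ ^ 2)) /
      ∑ l ∈ Finset.univ.erase i, Real.exp (-‖X i - X l‖ ^ 2 / (2 * σ ^ 2))

/-- Base-2 Shannon entropy of a distribution on `Fin n`. -/
def entropy2 (p : Fin n → ℝ) : ℝ := -∑ j, p j * Real.logb 2 (p j)

/-- `σ` is a perplexity-`ρ`-calibrated bandwidth for point `i`: it is nonnegative and
minimizes the gap between the entropy of `P_{·|i}(X;σ)` and `log₂ ρ`. -/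
def IsCalibrated [NormedAddCommGroup E] (X : Fin n → E) (ρ : ℝ) (i : Fin n) (σ : ℝ) : Prop :=
  0 ≤ σ ∧ ∀ σ' : ℝ, 0 ≤ σ' →
    |entropy2 (condAffinity X σ i) - Real.logb 2 ρ| ≤
      |entropy2 (condAffinity X σ' i) - Real.logb 2 ρ|

/-- The calibrated bandwidth `σ_i^*` (well defined by uniqueness of the minimizer). -/
def sigmaStar [NormedAddCommGroup E] (X : Fin n → E) (ρ : ℝ) (i : Fin n) : ℝ :=
  Classical.epsilon (IsCalibrated X ρ i)

/-- Symmetrized input affinity `P_{ij}(X)`. -/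
def inAffinity [NormedAddCommGroup E] (X : Fin n → E) (ρ : ℝ) (i j : Fin n) : ℝ :=
  if i = j then 0
  else (condAffinity X (sigmaStar X ρ j) j i + condAffinity X (sigmaStar X ρ i) i j) / (2 * n)

/-- Output affinity `Q_{ij}(Y)`. -/
def outAffinity [NormedAddCommGroup F] (Y : Fin n → F) (i j : Fin n) : ℝ :=
  if i = j then 0
  else (1 + ‖Y i - Y j‖ ^ 2)⁻¹ /
    ∑ p ∈ Finset.univ.offDiag, (1 + ‖Y p.1 - Y p.2‖ ^ 2)⁻¹

/-- The t-SNE loss `L_X(Y) = KL(P(X) ‖ Q(Y))`. -/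
def tsneLoss {d : ℕ} [NormedAddCommGroup E] (X : Fin n → E) (ρ : ℝ)
    (Y : Fin n → EuclideanSpace ℝ (Fin d)) : ℝ :=
  ∑ p ∈ Finset.univ.offDiag,
    inAffinity X ρ p.1 p.2 * Real.log (inAffinity X ρ p.1 p.2 / outAffinity Y p.1 p.2)

/-- The set of stationary t-SNE outputs in `ℝ^d` for input `X` and perplexity `ρ`. -/
def TSNE [NormedAddCommGroup E] (d : ℕ) (ρ : ℝ) (X : Fin n → E) :
    Set (Fin n → EuclideanSpace ℝ (Fin d)) :=
  {Y : Fin n → EuclideanSpace ℝ (Fin d) | fderiv ℝ (tsneLoss X ρ) Y = 0}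

/-- The image of t-SNE: all stationary outputs over all `n`-point inputs in `ℝ^{n-1}`. -/
def IMTSNE (n d : ℕ) (ρ : ℝ) : Set (Fin n → EuclideanSpace ℝ (Fin d)) :=
  ⋃ X : Fin n → EuclideanSpace ℝ (Fin (n - 1)), TSNE d ρ X

/-- The `m`-th cluster of the partition of `[n]` encoded by the labelling `ℓ`. -/
def cluster (ℓ : Fin n → Fin k) (m : Fin k) : Finset (Fin n) :=
  Finset.univ.filter fun i => ℓ i = m

/-- Average within-cluster distance `a(i)`. -/
def aScore [NormedAddCommGroup E] (X : Fin n → E) (ℓ : Fin n → Fin k) (i : Fin n) : ℝ :=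
  (∑ j ∈ cluster ℓ (ℓ i), ‖X i - X j‖) / (((cluster ℓ (ℓ i)).card : ℝ) - 1)

/-- Closest average across-cluster distance `b(i)`. -/
def bScore [NormedAddCommGroup E] (X : Fin n → E) (ℓ : Fin n → Fin k) (i : Fin n) : ℝ :=
  sInf {r : ℝ | ∃ m : Fin k, m ≠ ℓ i ∧
    r = (∑ j ∈ cluster ℓ m, ‖X i - X j‖) / ((cluster ℓ m).card : ℝ)}

/-- Silhouette score of point `i`. -/
def silhouette [NormedAddCommGroup E] (X : Fin n → E) (ℓ : Fin n → Fin k) (i : Fin n) : ℝ :=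
  if (cluster ℓ (ℓ i)).card = 1 then 0
  else (bScore X ℓ i - aScore X ℓ i) / max (aScore X ℓ i) (bScore X ℓ i)

/-- Average silhouette score `S̄(X; C₁,…,C_k)`. -/
def avgSilhouette [NormedAddCommGroup E] (X : Fin n → E) (ℓ : Fin n → Fin k) : ℝ :=
  (∑ i, silhouette X ℓ i) / (n : ℝ)

/-- Centroid `E(S)` of the points indexed by `S`. -/
def centroid [NormedAddCommGroup E] [NormedSpace ℝ E] (X : Fin n → E)
    (S : Finset (Fin n)) : E :=
  ((S.card : ℝ))⁻¹ • ∑ i ∈ S, X i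

/-- Numerator (between-cluster term) of the Calinski–Harabasz index. -/
def chNum [NormedAddCommGroup E] [NormedSpace ℝ E] (X : Fin n → E) (ℓ : Fin n → Fin k) : ℝ :=
  ((k : ℝ) - 1)⁻¹ *
    ∑ m : Fin k, ((cluster ℓ m).card : ℝ) *
      ‖centroid X (cluster ℓ m) - centroid X Finset.univ‖ ^ 2

/-- Denominator (within-cluster term) of the Calinski–Harabasz index. -/
def chDen [NormedAddCommGroup E] [NormedSpace ℝ E] (X : Fin n → E) (ℓ : Fin n → Fin k) : ℝ :=
  ((n : ℝ) - (k : ℝ))⁻¹ *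
    ∑ m : Fin k, ∑ i ∈ cluster ℓ m, ‖X i - centroid X (cluster ℓ m)‖ ^ 2

/-- Calinski–Harabasz index, valued in `[0,∞]`, with the conventions `CH = 1` when both
numerator and denominator vanish and `CH = ∞` when only the denominator vanishes. -/
def CHindex [NormedAddCommGroup E] [NormedSpace ℝ E] (X : Fin n → E) (ℓ : Fin n → Fin k) :
    EReal :=
  if chDen X ℓ = 0 then (if chNum X ℓ = 0 then 1 else ⊤)
  else ((chNum X ℓ / chDen X ℓ : ℝ) : EReal)

/-- Minimum between-cluster distance (numerator of the Dunn index). -/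
def diNum [NormedAddCommGroup E] (X : Fin n → E) (ℓ : Fin n → Fin k) : ℝ :=
  sInf {r : ℝ | ∃ i j : Fin n, ℓ i ≠ ℓ j ∧ r = ‖X i - X j‖}

/-- Maximum within-cluster distance (denominator of the Dunn index). -/
def diDen [NormedAddCommGroup E] (X : Fin n → E) (ℓ : Fin n → Fin k) : ℝ :=
  sSup {r : ℝ | ∃ i j : Fin n, ℓ i = ℓ j ∧ r = ‖X i - X j‖}

/-- Dunn index, valued in `[0,∞]`, with the conventions `DI = 1` when both numerator and
denominator vanish and `DI = ∞` when only the denominator vanishes. -/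
def DIindex [NormedAddCommGroup E] (X : Fin n → E) (ℓ : Fin n → Fin k) : EReal :=
  if diDen X ℓ = 0 then (if diNum X ℓ = 0 then 1 else ⊤)
  else ((diNum X ℓ / diDen X ℓ : ℝ) : EReal)

/-- `Y` is an `(α, Y i₀)`-outlier configuration: there is a hyperplane (with unit normal `v`)
separating `Y i₀` from the remaining points with margin width at least
`α · max{1, diam(Y ∖ {Y i₀})}`. -/
def IsOutlierConfig [NormedAddCommGroup F] [InnerProductSpace ℝ F] (Y : Fin n → F)
    (i0 : Fin n) (α : ℝ) : Prop :=
  0 < α ∧ ∃ v : F, ‖v‖ = 1 ∧ ∀ i : Fin n, i ≠ i0 →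
    α * max 1 (Metric.diam (Y '' {i : Fin n | i ≠ i0})) ≤ ⟪Y i - Y i0, v⟫

/-- The outlier number `α(Y, y₀)`: the largest `α` for which `Y` is an `(α, Y i₀)`-outlier
configuration (`0` if there is none). -/
def outlierNumber [NormedAddCommGroup F] [InnerProductSpace ℝ F] (Y : Fin n → F)
    (i0 : Fin n) : ℝ :=
  sSup {α : ℝ | IsOutlierConfig Y i0 α}

section Dunn

variable [NormedAddCommGroup E] {X : Fin n → E} {ℓ : Fin n → Fin k}

theorem finite_setOf_exists_norm_sub_eq (X : Fin n → E) (P : Fin n → Fin n → Prop) :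
    {r : ℝ | ∃ i j, P i j ∧ r = ‖X i - X j‖}.Finite :=
  (Set.finite_range fun p : Fin n × Fin n => ‖X p.1 - X p.2‖).subset
    (by rintro r ⟨i, j, -, rfl⟩; exact ⟨(i, j), rfl⟩)

theorem diNum_nonneg : 0 ≤ diNum X ℓ :=
  Real.sInf_nonneg (by rintro _ ⟨i, j, -, rfl⟩; exact norm_nonneg _)

theorem diDen_nonneg : 0 ≤ diDen X ℓ :=
  Real.sSup_nonneg (by rintro _ ⟨i, j, -, rfl⟩; exact norm_nonneg _)

theorem diNum_le {i j : Fin n} (hij : ℓ i ≠ ℓ j) : diNum X ℓ ≤ ‖X i - X j‖ :=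
  csInf_le (finite_setOf_exists_norm_sub_eq X _).bddBelow ⟨i, j, hij, rfl⟩

theorem le_diDen {i j : Fin n} (hij : ℓ i = ℓ j) : ‖X i - X j‖ ≤ diDen X ℓ :=
  le_csSup (finite_setOf_exists_norm_sub_eq X _).bddAbove ⟨i, j, hij, rfl⟩

theorem exists_label_ne_of_diNum_pos (h : 0 < diNum X ℓ) : ∃ i j, ℓ i ≠ ℓ j := by
  by_contra! hall
  have hempty : {r : ℝ | ∃ i j, ℓ i ≠ ℓ j ∧ r = ‖X i - X j‖} = ∅ :=
    Set.eq_empty_of_forall_notMem fun _ ⟨i, j, hij, _⟩ => hij (hall i j)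
  exact h.ne' (by rw [diNum, hempty, Real.sInf_empty])

theorem exists_norm_sub_eq_diNum (hex : ∃ i j, ℓ i ≠ ℓ j) :
    ∃ i j, ℓ i ≠ ℓ j ∧ ‖X i - X j‖ = diNum X ℓ := by
  obtain ⟨i, j, hij⟩ := hex
  obtain ⟨i', j', hij', hval⟩ := Set.Nonempty.csInf_mem (by exact ⟨_, i, j, hij, rfl⟩)
    (finite_setOf_exists_norm_sub_eq X fun i j => ℓ i ≠ ℓ j)
  exact ⟨i', j', hij', hval.symm⟩

/-- The diagonal pairs contribute `0` to the supremum, so it is attained at a pair of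
distinct points. -/
theorem exists_norm_sub_eq_diDen (hpair : ∃ i j, i ≠ j ∧ ℓ i = ℓ j) :
    ∃ i j, i ≠ j ∧ ℓ i = ℓ j ∧ ‖X i - X j‖ = diDen X ℓ := by
  obtain ⟨p, q, hpq, hl⟩ := hpair
  obtain ⟨i, j, hij, hval⟩ := Set.Nonempty.csSup_mem (by exact ⟨_, p, q, hl, rfl⟩)
    (finite_setOf_exists_norm_sub_eq X fun i j => ℓ i = ℓ j)
  by_cases h : i = j
  · refine ⟨p, q, hpq, hl, le_antisymm (le_diDen hl) ?_⟩
    rw [diDen, hval, h, sub_self, norm_zero]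
    exact norm_nonneg _
  · exact ⟨i, j, h, hij, hval.symm⟩

theorem diDen_lt_diNum_of_one_lt_DIindex (h : 1 < DIindex X ℓ) : diDen X ℓ < diNum X ℓ := by
  unfold DIindex at h
  split_ifs at h with hden hnum
  · exact absurd h (lt_irrefl 1)
  · exact hden ▸ diNum_nonneg.lt_of_ne' hnum
  · exact (one_lt_div (diDen_nonneg.lt_of_ne' hden)).1 (by exact_mod_cast h)

theorem mul_diDen_le_diNum_of_coe_le_DIindex {r : ℝ} (h : (r : EReal) ≤ DIindex X ℓ) :
    r * diDen X ℓ ≤ diNum X ℓ := by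
  by_cases hden : diDen X ℓ = 0
  · rw [hden, mul_zero]
    exact diNum_nonneg
  · rw [DIindex, if_neg hden] at h
    exact (le_div_iff₀ (diDen_nonneg.lt_of_ne' hden)).1 (by exact_mod_cast h)

end Dunn

def IsSqDistShift [NormedAddCommGroup E] [NormedAddCommGroup F] (X : Fin n → E)
    (Y : Fin n → F) (c : ℝ) : Prop :=
  ∀ i j, i ≠ j → ‖Y i - Y j‖ ^ 2 = ‖X i - X j‖ ^ 2 + c

section SqDistShift

variable [NormedAddCommGroup E] [NormedAddCommGroup F] {X : Fin n → E} {Y : Fin n → F} {c : ℝ}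

theorem IsSqDistShift.norm_sub_eq (h : IsSqDistShift X Y c) {i j : Fin n} (hij : i ≠ j) :
    ‖Y i - Y j‖ = √(‖X i - X j‖ ^ 2 + c) := by
  rw [← h i j hij, Real.sqrt_sq (norm_nonneg _)]

theorem IsSqDistShift.norm_sub_le_norm_sub_iff (h : IsSqDistShift X Y c) {i j l : Fin n}
    (hij : i ≠ j) (hil : i ≠ l) :
    ‖Y i - Y j‖ ≤ ‖Y i - Y l‖ ↔ ‖X i - X j‖ ≤ ‖X i - X l‖ := by
  rw [← sq_le_sq₀ (norm_nonneg _) (norm_nonneg _), h i j hij, h i l hil, add_le_add_iff_right,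
    sq_le_sq₀ (norm_nonneg _) (norm_nonneg _)]

theorem IsSqDistShift.nearestSet_eq (h : IsSqDistShift X Y c) : nearestSet Y = nearestSet X := by
  funext i
  refine Finset.filter_congr fun j hj => forall₂_congr fun l hl => ?_
  exact h.norm_sub_le_norm_sub_iff (Finset.ne_of_mem_erase hj).symm
    (Finset.ne_of_mem_erase hl).symm

theorem IsSqDistShift.condAffinity_eq (h : IsSqDistShift X Y c) :
    condAffinity Y = condAffinity X := by
  funext σ i j
  unfold condAffinity
  by_cases hji : j = i
  · simp [hji]
  by_cases hσ : σ = 0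
  · simp [hji, hσ, h.nearestSet_eq]
  · simp only [hji, hσ, if_false]
    have hweight : ∀ l ≠ i, Real.exp (-‖Y i - Y l‖ ^ 2 / (2 * σ ^ 2)) =
        Real.exp (-‖X i - X l‖ ^ 2 / (2 * σ ^ 2)) * Real.exp (-c / (2 * σ ^ 2)) := by
      intro l hl
      rw [← Real.exp_add, h i l (Ne.symm hl)]
      ring_nf
    rw [hweight j hji, Finset.sum_congr rfl fun l hl => hweight l (Finset.ne_of_mem_erase hl),
      ← Finset.sum_mul, mul_div_mul_right _ _ (Real.exp_ne_zero _)]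

theorem IsSqDistShift.diNum_eq (h : IsSqDistShift X Y c) {ℓ : Fin n → Fin k}
    (hex : ∃ i j, ℓ i ≠ ℓ j) : diNum Y ℓ = √(diNum X ℓ ^ 2 + c) := by
  obtain ⟨i, j, hij, hX⟩ := exists_norm_sub_eq_diNum (X := X) hex
  obtain ⟨i', j', hij', hY⟩ := exists_norm_sub_eq_diNum (X := Y) hex
  apply le_antisymm
  · calc diNum Y ℓ ≤ ‖Y i - Y j‖ := diNum_le hij
      _ = √(diNum X ℓ ^ 2 + c) := by rw [h.norm_sub_eq (ne_of_apply_ne ℓ hij), hX]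
  · calc √(diNum X ℓ ^ 2 + c) ≤ √(‖X i' - X j'‖ ^ 2 + c) := by
          gcongr
          exacts [diNum_nonneg, diNum_le hij']
      _ = diNum Y ℓ := by rw [← h.norm_sub_eq (ne_of_apply_ne ℓ hij'), hY]

theorem IsSqDistShift.diDen_eq (h : IsSqDistShift X Y c) {ℓ : Fin n → Fin k}
    (hpair : ∃ i j, i ≠ j ∧ ℓ i = ℓ j) : diDen Y ℓ = √(diDen X ℓ ^ 2 + c) := by
  obtain ⟨i, j, hij, hl, hX⟩ := exists_norm_sub_eq_diDen (X := X) hpair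
  obtain ⟨i', j', hij', hl', hY⟩ := exists_norm_sub_eq_diDen (X := Y) hpair
  apply le_antisymm
  · calc diDen Y ℓ = √(‖X i' - X j'‖ ^ 2 + c) := by rw [← h.norm_sub_eq hij', hY]
      _ ≤ √(diDen X ℓ ^ 2 + c) := by
          gcongr
          exact le_diDen hl'
  · calc √(diDen X ℓ ^ 2 + c) = ‖Y i - Y j‖ := by rw [h.norm_sub_eq hij, hX]
      _ ≤ diDen Y ℓ := le_diDen hl

theorem IsSqDistShift.of_congruent {G : Type*} [NormedAddCommGroup G] {Z : Fin n → G}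
    (h : IsSqDistShift X Z c) (hYZ : Congruent Y Z) : IsSqDistShift X Y c := by
  intro i j hij
  rw [← dist_eq_norm, hYZ.dist_eq, dist_eq_norm, h i j hij]

end SqDistShift

theorem TSNE_eq_of_condAffinity_eq [NormedAddCommGroup E] [NormedAddCommGroup F]
    {X : Fin n → E} {Y : Fin n → F} (h : condAffinity X = condAffinity Y) (d : ℕ) (ρ : ℝ) :
    TSNE d ρ X = TSNE d ρ Y := by
  have hσ : sigmaStar X ρ = sigmaStar Y ρ := by
    unfold sigmaStar IsCalibrated
    rw [h]
  have hP : inAffinity X ρ = inAffinity Y ρ := by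
    unfold inAffinity
    rw [h, hσ]
  unfold TSNE tsneLoss
  rw [hP]

theorem exists_linearIsometry_euclideanSpace_of_finrank_le {V : Type*} [NormedAddCommGroup V]
    [InnerProductSpace ℝ V] [FiniteDimensional ℝ V] {m : ℕ} (h : Module.finrank ℝ V ≤ m) :
    Nonempty (V →ₗᵢ[ℝ] EuclideanSpace ℝ (Fin m)) := by
  let b := stdOrthonormalBasis ℝ V
  let f := b.toBasis.constr ℝ fun i => EuclideanSpace.single (Fin.castLE h i) (1 : ℝ)
  have hf : Orthonormal ℝ (f ∘ b.toBasis) := by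
    convert EuclideanSpace.orthonormal_single.comp _ (Fin.castLE_injective h) using 1
    ext1 i
    simp [f]
  exact ⟨f.isometryOfOrthonormal (b.coe_toBasis ▸ b.orthonormal) hf⟩

theorem exists_congruent_euclideanSpace [NormedAddCommGroup F] [InnerProductSpace ℝ F]
    (Z : Fin n → F) : ∃ Y : Fin n → EuclideanSpace ℝ (Fin (n - 1)), Congruent Y Z := by
  cases n with
  | zero => exact ⟨Fin.elim0, fun i => i.elim0⟩
  | succ m =>
    let S := Submodule.span ℝ (Set.range fun i : Fin m => Z i.succ - Z 0)
    have hmem : ∀ i, Z i - Z 0 ∈ S := Fin.cases (by simp) fun i => Submodule.subset_span ⟨i, rfl⟩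
    have : FiniteDimensional ℝ S := FiniteDimensional.span_of_finite ℝ (Set.finite_range _)
    obtain ⟨L⟩ := exists_linearIsometry_euclideanSpace_of_finrank_le (V := S)
      (finrank_range_le_card _ |>.trans_eq (Fintype.card_fin m))
    refine ⟨fun i => L ⟨Z i - Z 0, hmem i⟩, Congruent.of_dist_eq fun i j => ?_⟩
    rw [dist_eq_norm, ← map_sub, L.norm_map, dist_eq_norm]
    simp [S]

theorem exists_isSqDistShift_prod [NormedAddCommGroup F] (X : Fin n → F) {c : ℝ} (hc : 0 ≤ c) :
    ∃ Z : Fin n → WithLp 2 (F × EuclideanSpace ℝ (Fin n)), IsSqDistShift X Z c := by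
  refine ⟨fun i => WithLp.toLp 2 (X i, √(c / 2) • EuclideanSpace.single i 1), fun i j hij => ?_⟩
  have hsimplex : ‖EuclideanSpace.single i (1 : ℝ) - EuclideanSpace.single j 1‖ ^ 2 = 2 := by
    rw [norm_sub_sq_real, EuclideanSpace.inner_single_left]
    norm_num [hij.symm]
  rw [← WithLp.toLp_sub, WithLp.prod_norm_sq_eq_of_L2]
  simp only [WithLp.toLp_fst, WithLp.toLp_snd, Prod.fst_sub, Prod.snd_sub, ← smul_sub, norm_smul,
    mul_pow, hsimplex, Real.norm_eq_abs, sq_abs, Real.sq_sqrt (div_nonneg hc zero_le_two)]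
  ring

theorem exists_isSqDistShift (X : Fin n → EuclideanSpace ℝ (Fin (n - 1))) {c : ℝ} (hc : 0 ≤ c) :
    ∃ Y : Fin n → EuclideanSpace ℝ (Fin (n - 1)), IsSqDistShift X Y c := by
  obtain ⟨Z, hZ⟩ := exists_isSqDistShift_prod X hc
  obtain ⟨Y, hYZ⟩ := exists_congruent_euclideanSpace Z
  exact ⟨Y, hZ.of_congruent hYZ⟩

theorem exists_sqrt_add_div_sqrt_add_eq {a b r : ℝ} (hb : 0 ≤ b) (hba : b < a) (hr : 1 < r)
    (hrba : r * b ≤ a) :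
    ∃ c, 0 ≤ c ∧ 0 < b ^ 2 + c ∧ √(a ^ 2 + c) / √(b ^ 2 + c) = r := by
  have hr2 : 0 < r ^ 2 - 1 := by nlinarith
  have hrb : (r * b) ^ 2 ≤ a ^ 2 := pow_le_pow_left₀ (by positivity) hrba 2
  set c := (a ^ 2 - r ^ 2 * b ^ 2) / (r ^ 2 - 1)
  have hcr : c * (r ^ 2 - 1) = a ^ 2 - r ^ 2 * b ^ 2 := div_mul_cancel₀ _ hr2.ne'
  have hpos : 0 < b ^ 2 + c := by
    have hprod : (b ^ 2 + c) * (r ^ 2 - 1) = a ^ 2 - b ^ 2 := by linear_combination hcr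
    exact (mul_pos_iff_of_pos_right hr2).1 (hprod ▸ by nlinarith)
  have hscale : a ^ 2 + c = r ^ 2 * (b ^ 2 + c) := by linear_combination -hcr
  refine ⟨c, div_nonneg (by nlinarith) hr2.le, hpos, ?_⟩
  rw [hscale, Real.sqrt_mul (sq_nonneg r), Real.sqrt_sq (by linarith),
    mul_div_cancel_right₀ _ (Real.sqrt_pos.2 hpos).ne']

theorem DI_impostor_general (n k d : ℕ)
    (X : Fin n → EuclideanSpace ℝ (Fin (n - 1)))
    (ℓ : Fin n → Fin k)
    (hcard : ∀ m : Fin k, 1 < (cluster ℓ m).card)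
    (hDI : 1 < DIindex X ℓ) :
    ∀ ε : EReal, 1 < ε → ε ≤ DIindex X ℓ →
      ∃ Xε : Fin n → EuclideanSpace ℝ (Fin (n - 1)),
        DIindex Xε ℓ = ε ∧
        ∀ ρ : ℝ, 1 < ρ → ρ < (n : ℝ) - 1 → TSNE d ρ X = TSNE d ρ Xε := by
  intro ε hε1 hεX
  have hsep := diDen_lt_diNum_of_one_lt_DIindex hDI
  obtain ⟨i, j, hij⟩ := exists_label_ne_of_diNum_pos (diDen_nonneg.trans_lt hsep)
  have hpair : ∃ p q, p ≠ q ∧ ℓ p = ℓ q := by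
    obtain ⟨p, hp, q, hq, hpq⟩ := Finset.one_lt_card.1 (hcard (ℓ i))
    simp only [cluster, Finset.mem_filter] at hp hq
    exact ⟨p, q, hpq, hp.2.trans hq.2.symm⟩
  induction ε using EReal.rec with
  | bot => exact absurd hε1 not_lt_bot
  | top => exact ⟨X, top_le_iff.1 hεX, fun _ _ _ => rfl⟩
  | coe r =>
    obtain ⟨c, hc, hpos, hratio⟩ := exists_sqrt_add_div_sqrt_add_eq diDen_nonneg hsep
      (by exact_mod_cast hε1) (mul_diDen_le_diNum_of_coe_le_DIindex hεX)
    obtain ⟨Y, hY⟩ := exists_isSqDistShift X hc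
    refine ⟨Y, ?_, fun ρ _ _ => TSNE_eq_of_condAffinity_eq hY.condAffinity_eq.symm d ρ⟩
    rw [DIindex, hY.diNum_eq ⟨i, j, hij⟩, hY.diDen_eq hpair,
      if_neg (Real.sqrt_pos.2 hpos).ne', hratio]

/-- Theorem `unclustHammerDunn`: any stationary t-SNE output can be produced
by an input whose Dunn index is any prescribed value in `(1, DI(X)]`. -/
theorem DI_impostor (n k d : ℕ) (hk : 1 < k) (hkn : k < n) (hd : 1 ≤ d)
    (X : Fin n → EuclideanSpace ℝ (Fin (n - 1)))
    (ℓ : Fin n → Fin k)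
    (hcard : ∀ m : Fin k, 1 < (cluster ℓ m).card)
    (hDI : 1 < DIindex X ℓ) :
    ∀ ε : EReal, 1 < ε → ε ≤ DIindex X ℓ →
      ∃ Xε : Fin n → EuclideanSpace ℝ (Fin (n - 1)),
        DIindex Xε ℓ = ε ∧
        ∀ ρ : ℝ, 1 < ρ → ρ < (n : ℝ) - 1 → TSNE d ρ X = TSNE d ρ Xε :=
  DI_impostor_general n k d X ℓ hcard hDI

end TSNEPaper
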